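/- Let R be a commutative ring, d ≥ 2, and let α_1,…,α_d be types. Let E_k : α_k → R and D_k : α_k → R for k = 1,…,d, let F : α_1 → R, and for each i = 2,…,d let A_i : α_{i-1} → R and B_i : α_i → R. Define H(x_1,…,x_d) = Σ_{m=1}^d (∏_{k<m} E_k(x_k))·D_m(x_m)·(∏_{k>m} E_k(x_k)) + F(x_1)·∏_{k=2}^d E_k(x_k) + Σ_{i=2}^d (∏_{k=1}^{i-2} E_k(x_k))·A_i(x_{i-1})·B_i(x_i)·(∏_{k=i+1}^d E_k(x_k)), i.e. the sum of a Laplace-like destruction part and a cascadic creation part. Then H admits a TT representation with all ranks at most 5. (This is the rank bound for the CME operator of a signaling cascade model.) -/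

import Mathlib

/-! The function `H` is the total weight of the accepting paths of a three-state automaton read
along the positions: state 0 means that only factors `E` have been read, state 1 that some `A j`
has just been read and `B j` is due at the next position, state 2 that the distinguished factor
(`D m`, `F`, or the pair `A j`, `B j`) has been placed. Its transfer matrices are
`!![E, A, D; 0, 0, B; 0, 0, E]` (with `F` added to `D` at position 0), so `H x` is the `(0, 2)`
entry of their product, and cutting the first core down to row 0 and the last one to column 2
gives a TT representation with ranks `1, 3, …, 3, 1`. -/

open Finset

/-- `f` admits a tensor-train (TT) representation with ranks `r 0, …, r d`
(with `r 0 = r d = 1`): there are cores `G i` such that `f x` equals the `(0,0)`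
entry of the matrix product `G 0 (x 0) * ⋯ * G (d-1) (x (d-1))`, written here as
the sum over all index paths (the boundary indices range over `Fin 1`). -/
def IsTTRep {R : Type*} [CommRing R] {d : ℕ} {α : Fin d → Type*}
    (f : (∀ i, α i) → R) (r : Fin (d + 1) → ℕ) : Prop :=
  r 0 = 1 ∧ r (Fin.last d) = 1 ∧
    ∃ G : ∀ i : Fin d, α i → Matrix (Fin (r i.castSucc)) (Fin (r i.succ)) R,
      ∀ x : ∀ i, α i,
        f x = ∑ β : ∀ j : Fin (d + 1), Fin (r j),
                ∏ i : Fin d, G i (x i) (β i.castSucc) (β i.succ)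

namespace Matrix

variable {R : Type*} [CommSemiring R]

def chainProd {ρ : ℕ → ℕ} (M : ∀ i, Matrix (Fin (ρ i)) (Fin (ρ (i + 1))) R) :
    ∀ N, Matrix (Fin (ρ 0)) (Fin (ρ N)) R
  | 0 => 1
  | N + 1 => chainProd M N * M N

theorem sum_pi_prod_mul_eq_sum_chainProd_mul {ρ : ℕ → ℕ}
    (M : ∀ i, Matrix (Fin (ρ i)) (Fin (ρ (i + 1))) R) :
    ∀ (d : ℕ) (v : Fin (ρ d) → R),
      ∑ β : ∀ j : Fin (d + 1), Fin (ρ j),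
          (∏ i : Fin d, M i (β i.castSucc) (β i.succ)) * v (β (Fin.last d)) =
        ∑ a, ∑ b, chainProd M d a b * v b
  | 0, v => by
    rw [← (Equiv.piUnique fun j : Fin 1 => Fin (ρ j)).symm.sum_comp]
    simp [chainProd, Matrix.one_apply, Equiv.piUnique, uniqueElim]
  | d + 1, v => by
    rw [← (Fin.snocEquiv fun j : Fin (d + 2) => Fin (ρ j)).sum_comp, Fintype.sum_prod_type,
      Finset.sum_comm]
    simp only [Fin.snocEquiv_apply, Fin.prod_univ_castSucc, Fin.succ_castSucc, Fin.snoc_castSucc,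
      Fin.succ_last, Fin.snoc_last, mul_assoc, ← Finset.mul_sum]
    refine (sum_pi_prod_mul_eq_sum_chainProd_mul M d fun c => ∑ b, M d c b * v b).trans ?_
    simp only [chainProd, Matrix.mul_apply, Finset.mul_sum, Finset.sum_mul, mul_assoc]
    exact Finset.sum_congr rfl fun _ _ => Finset.sum_comm

theorem sum_pi_prod_eq_sum_chainProd {ρ : ℕ → ℕ}
    (M : ∀ i, Matrix (Fin (ρ i)) (Fin (ρ (i + 1))) R) (d : ℕ) :
    ∑ β : ∀ j : Fin (d + 1), Fin (ρ j), ∏ i : Fin d, M i (β i.castSucc) (β i.succ) =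
      ∑ a, ∑ b, chainProd M d a b := by
  simpa using sum_pi_prod_mul_eq_sum_chainProd_mul M d 1

theorem prod_ofFn_eq_chainProd {m : ℕ} (T : ℕ → Matrix (Fin m) (Fin m) R) :
    ∀ N, (List.ofFn fun i : Fin N => T i).prod = chainProd (ρ := fun _ => m) T N
  | 0 => rfl
  | N + 1 => by
    rw [List.ofFn_succ', List.prod_concat]
    simp only [Fin.val_castSucc, Fin.val_last]
    rw [prod_ofFn_eq_chainProd T N]
    rfl

end Matrix

section BoundaryRestriction

variable {R : Type*} [CommSemiring R] {d m : ℕ}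

def boundaryRank (d m j : ℕ) : ℕ := if j = 0 ∨ j = d then 1 else m

theorem boundaryRank_le_max (d m j : ℕ) : boundaryRank d m j ≤ max 1 m := by
  unfold boundaryRank; split_ifs <;> omega

/-- The outer bonds `0` and `d` carry a single index, which stands for the state `s` resp. `t`. -/
def boundaryState (s t : Fin m) (j : ℕ) (a : Fin (boundaryRank d m j)) : Fin m :=
  if h : j = 0 ∨ j = d then (if j = 0 then s else t)
  else Fin.cast (by simp [boundaryRank, h]) a

def restrictCores (s t : Fin m) (T : ℕ → Matrix (Fin m) (Fin m) R) (i : ℕ) :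
    Matrix (Fin (boundaryRank d m i)) (Fin (boundaryRank d m (i + 1))) R :=
  Matrix.of fun a b => T i (boundaryState s t i a) (boundaryState s t (i + 1) b)

theorem chainProd_restrictCores_apply (s t : Fin m) (T : ℕ → Matrix (Fin m) (Fin m) R) :
    ∀ N, N + 1 ≤ d → ∀ a b,
      Matrix.chainProd (restrictCores (d := d) s t T) (N + 1) a b =
        Matrix.chainProd (ρ := fun _ => m) T (N + 1) s (boundaryState s t (N + 1) b)
  | 0, _, a, b => by
    simp [Matrix.chainProd, restrictCores, boundaryState]
  | N + 1, hN, a, b => by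
    have hρ : boundaryRank d m (N + 1) = m := by rw [boundaryRank, if_neg (by omega)]
    rw [Matrix.chainProd.eq_2, Matrix.mul_apply]
    simp only [chainProd_restrictCores_apply s t T N (by omega), restrictCores, Matrix.of_apply]
    refine (Fintype.sum_equiv (finCongr hρ) _ _ fun c => ?_).trans Matrix.mul_apply.symm
    simp [boundaryState, show N + 1 ≠ d by omega]

end BoundaryRestriction

theorem isTTRep_of_forall_eq_prod_apply {R : Type*} [CommRing R] {d m : ℕ} (hd : d ≠ 0)
    {α : Fin d → Type*} (f : (∀ i, α i) → R) (G : ∀ i, α i → Matrix (Fin m) (Fin m) R)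
    (s t : Fin m) (hf : ∀ x, f x = (List.ofFn fun i => G i (x i)).prod s t) :
    IsTTRep f fun j => boundaryRank d m j := by
  refine ⟨by simp [boundaryRank], by simp [boundaryRank],
    fun i y => Matrix.of fun a b => G i y (boundaryState s t i a) (boundaryState s t (i + 1) b),
    fun x => ?_⟩
  set T : ℕ → Matrix (Fin m) (Fin m) R :=
    fun k => if h : k < d then G ⟨k, h⟩ (x ⟨k, h⟩) else 1
  have hT (i : Fin d) : T i = G i (x i) := dif_pos i.isLt
  have hρ0 : boundaryRank d m 0 = 1 := by simp [boundaryRank]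
  have hρd : boundaryRank d m d = 1 := by simp [boundaryRank]
  obtain ⟨N, rfl⟩ := Nat.exists_eq_add_one_of_ne_zero hd
  calc f x = Matrix.chainProd (ρ := fun _ => m) T (N + 1) s t := by
        simp only [hf x, ← hT, Matrix.prod_ofFn_eq_chainProd]
    _ = ∑ a, ∑ b, Matrix.chainProd (restrictCores (d := N + 1) s t T) (N + 1) a b := by
        simp only [chainProd_restrictCores_apply s t T N le_rfl]
        rw [← Fin.sum_congr' _ hρ0.symm, ← Fin.sum_congr' _ hρd.symm]
        simp [boundaryState]
    _ = _ := by
        rw [← Matrix.sum_pi_prod_eq_sum_chainProd]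
        simp [restrictCores, hT]

theorem sum_range_mul_prod_Ico_succ_top {R : Type*} [CommSemiring R] (g e : ℕ → R) {L M s : ℕ}
    (h : L + s ≤ M + 1) :
    ∑ m ∈ range L, g m * ∏ k ∈ Ico (m + s) (M + 1), e k =
      (∑ m ∈ range L, g m * ∏ k ∈ Ico (m + s) M, e k) * e M := by
  rw [sum_mul]
  refine sum_congr rfl fun m hm => ?_
  rw [prod_Ico_succ_top (by simp at hm; omega), mul_assoc]

section FinFilter

variable {M : Type*} [CommMonoid M] (f : ℕ → M) {N : ℕ}

theorem Fin.prod_filter_val_eq_prod_filter_range (p : ℕ → Prop) [DecidablePred p] :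
    ∏ k ∈ univ.filter (fun k : Fin N => p k), f k = ∏ k ∈ (range N).filter p, f k := by
  rw [prod_filter, prod_filter, Fin.prod_univ_eq_prod_range (fun k => if p k then f k else 1)]

theorem Fin.prod_filter_val_lt {m : ℕ} (h : m ≤ N) :
    ∏ k ∈ univ.filter (fun k : Fin N => (k : ℕ) < m), f k = ∏ k ∈ range m, f k := by
  rw [Fin.prod_filter_val_eq_prod_filter_range f (fun k => k < m)]
  congr 1; ext k; simp; omega

theorem Fin.prod_filter_le_val (m : ℕ) :
    ∏ k ∈ univ.filter (fun k : Fin N => m ≤ (k : ℕ)), f k = ∏ k ∈ Ico m N, f k := by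
  rw [Fin.prod_filter_val_eq_prod_filter_range f (fun k => m ≤ k)]
  congr 1; ext k; simp; omega

theorem Fin.prod_filter_lt_val (m : ℕ) :
    ∏ k ∈ univ.filter (fun k : Fin N => m < (k : ℕ)), f k = ∏ k ∈ Ico (m + 1) N, f k := by
  rw [Fin.prod_filter_val_eq_prod_filter_range f (fun k => m < k)]
  congr 1; ext k; simp; omega

end FinFilter

section Cascade

variable {R : Type*} [CommSemiring R]

def cascadeMatrix (e a δ c : R) : Matrix (Fin 3) (Fin 3) R :=
  !![e, a, δ; 0, 0, c; 0, 0, e]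

variable (e a δ c : ℕ → R)

def cascadeProd (N : ℕ) : Matrix (Fin 3) (Fin 3) R :=
  (List.ofFn fun k : Fin N => cascadeMatrix (e k) (a k) (δ k) (c k)).prod

theorem cascadeProd_succ (N : ℕ) :
    cascadeProd e a δ c (N + 1) =
      cascadeProd e a δ c N * cascadeMatrix (e N) (a N) (δ N) (c N) := by
  rw [cascadeProd, List.ofFn_succ', List.prod_concat]
  simp only [Fin.val_castSucc, Fin.val_last, cascadeProd]

theorem cascadeProd_zero_zero (N : ℕ) :
    cascadeProd e a δ c N 0 0 = ∏ k ∈ range N, e k := by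
  induction N with
  | zero => simp [cascadeProd]
  | succ N ih =>
    simp [cascadeProd_succ, Matrix.mul_apply, Fin.sum_univ_three, cascadeMatrix, ih,
      prod_range_succ]

theorem cascadeProd_zero_one (N : ℕ) :
    cascadeProd e a δ c (N + 1) 0 1 = (∏ k ∈ range N, e k) * a N := by
  simp [cascadeProd_succ, Matrix.mul_apply, Fin.sum_univ_three, cascadeMatrix,
    cascadeProd_zero_zero]

theorem cascadeProd_zero_two (N : ℕ) :
    cascadeProd e a δ c (N + 1) 0 2 =
      ∑ m ∈ range (N + 1),
          (∏ k ∈ range m, e k) * δ m * ∏ k ∈ Ico (m + 1) (N + 1), e k +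
        ∑ j ∈ range N,
          (∏ k ∈ range j, e k) * a j * c (j + 1) * ∏ k ∈ Ico (j + 2) (N + 1), e k := by
  induction N with
  | zero => simp [cascadeProd, Matrix.mul_apply, Fin.sum_univ_three, cascadeMatrix]
  | succ N ih =>
    simp only [sum_range_succ _ N, sum_range_succ _ (N + 1)] at ih ⊢
    rw [sum_range_mul_prod_Ico_succ_top _ _ (by omega : N + 1 ≤ N + 1 + 1),
      sum_range_mul_prod_Ico_succ_top _ _ (by omega : N + 2 ≤ N + 1 + 1),
      cascadeProd_succ, Matrix.mul_apply, Fin.sum_univ_three, cascadeProd_zero_zero,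
      cascadeProd_zero_one, ih]
    simp only [cascadeMatrix, Matrix.of_apply, Matrix.cons_val', Matrix.cons_val,
      Matrix.cons_val_fin_one, Matrix.cons_val_zero, Matrix.cons_val_one, Ico_self, prod_empty,
      mul_one, Nat.Ico_succ_singleton, prod_singleton]
    ring

end Cascade

def cascadeCore {R : Type*} [CommSemiring R] {n : ℕ} {α : Fin (n + 2) → Type*}
    (E D : ∀ k, α k → R) (F : α 0 → R) (A : ∀ j : Fin (n + 1), α j.castSucc → R)
    (B : ∀ j : Fin (n + 1), α j.succ → R) (i : Fin (n + 2)) (y : α i) :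
    Matrix (Fin 3) (Fin 3) R :=
  cascadeMatrix (E i y) (Fin.lastCases (motive := fun i => α i → R) 0 A i y)
    (D i y + Fin.cases (motive := fun i => α i → R) F 0 i y)
    (Fin.cases (motive := fun i => α i → R) 0 B i y)

theorem prod_ofFn_cascadeCore_zero_two {R : Type*} [CommSemiring R] {n : ℕ}
    {α : Fin (n + 2) → Type*} (E D : ∀ k, α k → R) (F : α 0 → R)
    (A : ∀ j : Fin (n + 1), α j.castSucc → R) (B : ∀ j : Fin (n + 1), α j.succ → R)
    (x : ∀ i, α i) :
    (List.ofFn fun i => cascadeCore E D F A B i (x i)).prod 0 2 =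
      (∑ m : Fin (n + 2),
          (∏ k ∈ univ.filter (fun k : Fin (n + 2) => (k : ℕ) < m), E k (x k)) * D m (x m) *
            ∏ k ∈ univ.filter (fun k : Fin (n + 2) => (m : ℕ) < k), E k (x k)) +
        F (x 0) * ∏ k ∈ univ.filter (fun k : Fin (n + 2) => 1 ≤ (k : ℕ)), E k (x k) +
        ∑ j : Fin (n + 1),
          (∏ k ∈ univ.filter (fun k : Fin (n + 2) => (k : ℕ) < j), E k (x k)) *
            A j (x j.castSucc) * B j (x j.succ) *
            ∏ k ∈ univ.filter (fun k : Fin (n + 2) => (j : ℕ) + 1 < k), E k (x k) := by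
  obtain ⟨e, he⟩ : ∃ e : ℕ → R, ∀ i : Fin (n + 2), e i = E i (x i) :=
    ⟨_, Fin.val_injective.extend_apply _ 0⟩
  obtain ⟨a, ha⟩ : ∃ a : ℕ → R, ∀ i : Fin (n + 2),
      a i = Fin.lastCases (motive := fun i => α i → R) 0 A i (x i) :=
    ⟨_, Fin.val_injective.extend_apply _ 0⟩
  obtain ⟨δ, hδ⟩ : ∃ δ : ℕ → R, ∀ i : Fin (n + 2),
      δ i = D i (x i) + Fin.cases (motive := fun i => α i → R) F 0 i (x i) :=
    ⟨_, Fin.val_injective.extend_apply _ 0⟩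
  obtain ⟨c, hc⟩ : ∃ c : ℕ → R, ∀ i : Fin (n + 2),
      c i = Fin.cases (motive := fun i => α i → R) 0 B i (x i) :=
    ⟨_, Fin.val_injective.extend_apply _ 0⟩
  have hA (j : Fin (n + 1)) : a j = A j (x j.castSucc) := by simpa using ha j.castSucc
  have hB (j : Fin (n + 1)) : c (j + 1) = B j (x j.succ) := by simpa using hc j.succ
  have hcores : (List.ofFn fun i => cascadeCore E D F A B i (x i)) =
      List.ofFn fun i : Fin (n + 2) => cascadeMatrix (e i) (a i) (δ i) (c i) := by
    simp only [cascadeCore, he, ha, hδ, hc]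
  rw [hcores, ← cascadeProd, cascadeProd_zero_two]
  simp only [← he, ← hA, ← hB]
  simp (disch := omega) only [Fin.prod_filter_val_lt, Fin.prod_filter_le_val,
    Fin.prod_filter_lt_val]
  rw [← Fin.sum_univ_eq_sum_range, ← Fin.sum_univ_eq_sum_range]
  -- the `F`-part of `δ` lives only at position 0
  simp only [hδ, mul_add, add_mul, sum_add_distrib, Fin.sum_univ_succ (n := n + 1)]
  simp only [Fin.val_zero, Fin.val_succ, range_zero, prod_empty, one_mul, zero_add,
    Fin.cases_zero, Fin.cases_succ, Pi.zero_apply, mul_zero, zero_mul, sum_const_zero, add_zero]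
  ring

/-- **Rank-5 TT bound for the CME operator of a signaling cascade**
(Corollary 4.5 of the paper): the sum of a Laplace-like (destruction) part and a
cascadic (creation) part admits a TT representation with all ranks at most 5.
The dimension is `d = n + 2 ≥ 2`; positions are 0-based, and the pair terms
(indexed by `j : Fin (n + 1)`) act on the adjacent positions `j.castSucc`,
`j.succ`. -/
theorem cascade_cme_operator_tt_rank_le_five {R : Type*} [CommRing R] (n : ℕ)
    (α : Fin (n + 2) → Type*)
    (E : ∀ k : Fin (n + 2), α k → R) (D : ∀ k : Fin (n + 2), α k → R)
    (F : α 0 → R)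
    (A : ∀ j : Fin (n + 1), α j.castSucc → R)
    (B : ∀ j : Fin (n + 1), α j.succ → R)
    (H : (∀ i, α i) → R)
    (hH : ∀ x : ∀ i, α i,
      H x = (∑ m : Fin (n + 2),
              (∏ k ∈ Finset.univ.filter (fun k : Fin (n + 2) => (k : ℕ) < (m : ℕ)), E k (x k))
              * D m (x m)
              * ∏ k ∈ Finset.univ.filter (fun k : Fin (n + 2) => (m : ℕ) < (k : ℕ)), E k (x k))
          + F (x 0) *
              ∏ k ∈ Finset.univ.filter (fun k : Fin (n + 2) => 1 ≤ (k : ℕ)), E k (x k)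
          + ∑ j : Fin (n + 1),
              (∏ k ∈ Finset.univ.filter (fun k : Fin (n + 2) => (k : ℕ) < (j : ℕ)), E k (x k))
              * A j (x j.castSucc) * B j (x j.succ)
              * ∏ k ∈ Finset.univ.filter (fun k : Fin (n + 2) => (j : ℕ) + 1 < (k : ℕ)),
                  E k (x k)) :
    ∃ r : Fin (n + 3) → ℕ, (∀ j, r j ≤ 5) ∧ IsTTRep H r := by
  refine ⟨fun j => boundaryRank (n + 2) 3 j,
    fun j => (boundaryRank_le_max _ _ _).trans (by norm_num),
    isTTRep_of_forall_eq_prod_apply (by omega) H (cascadeCore E D F A B) 0 2 fun x => ?_⟩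
  rw [hH x, prod_ofFn_cascadeCore_zero_two]
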